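/- Every strictly convex body inscribed in the rhombic dodecahedron D₃ (touching all twelve faces) has positive volume; more generally, any convex body inscribed in D₃ that is not contained in a plane has positive volume, and among all closed convex sets inscribed in D₃ the minimum volume 0 is attained only by squares (up to the symmetries of D₃). -/

import Mathlib

/-!
A convex set of volume zero has empty interior, so it lies in a hyperplane `⟪x, n⟫ = c`; a
strictly convex set with two distinct points has interior points. For a root `u`, an inscribed
set contains points `x`, `y` on the opposite faces `⟪·, u⟫ = ±1`. As `D₃` lies in the ball of
radius `√2`, the chord `x - y` has length at most `2√2`, has `⟪x - y, u⟫ = 2` and is orthogonal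
to `n`; this forces `2 ⟪u, n⟫² ≤ ‖n‖²`. For the roots `(eᵢ ± eⱼ)/√2` this reads
`2 |nᵢ nⱼ| ≤ nₖ²`, so `n` has a single nonzero coordinate and the set lies in a coordinate plane,
which the faces `(eᵢ ± eₖ)/√2` force to be `xₖ = 0`. There `D₃` cuts out the square with vertices
`±√2 eᵢ, ±√2 eⱼ`, and the faces `(±eᵢ + eₖ)/√2`, `(±eⱼ + eₖ)/√2` meet the square only in these
vertices, so the set contains them and is the whole square.
-/

open RealInnerProductSpace MeasureTheory

/-- The A₃ root system: the 12 unit vectors that are permutations of `(±1/√2, ±1/√2, 0)`. -/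
def A3roots : Set (EuclideanSpace ℝ (Fin 3)) :=
  {v | ∃ (i j : Fin 3) (s t : ℝ), i ≠ j ∧ (s = 1 ∨ s = -1) ∧ (t = 1 ∨ t = -1) ∧
    v = fun k => if k = i then s / Real.sqrt 2 else if k = j then t / Real.sqrt 2 else 0}

/-- The rhombic dodecahedron circumscribing the unit sphere. -/
def D3 : Set (EuclideanSpace ℝ (Fin 3)) := {x | ∀ v ∈ A3roots, ⟪x, v⟫ ≤ 1}

/-- `K` is inscribed in `D3`: contained in it and touching all twelve faces. -/
def InscribedInD3 (K : Set (EuclideanSpace ℝ (Fin 3))) : Prop :=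
  K ⊆ D3 ∧ ∀ v ∈ A3roots, ∃ x ∈ K, ⟪x, v⟫ = 1

/-- `K` is a (possibly degenerate planar) square in ℝ³. -/
def IsSquareIn3 (K : Set (EuclideanSpace ℝ (Fin 3))) : Prop :=
  ∃ p a b : EuclideanSpace ℝ (Fin 3), ⟪a, b⟫ = 0 ∧ ‖a‖ = ‖b‖ ∧ a ≠ 0 ∧
    K = convexHull ℝ {p + a + b, p + a - b, p - a + b, p - a - b}

section InnerProductSpace

variable {E : Type*} [NormedAddCommGroup E] [InnerProductSpace ℝ E]

theorem inner_sq_mul_norm_sq_le_of_inner_eq_zero {d n : E} (u : E) (h : ⟪d, n⟫ = 0) :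
    ⟪d, u⟫ ^ 2 * ‖n‖ ^ 2 ≤ ‖d‖ ^ 2 * (‖u‖ ^ 2 * ‖n‖ ^ 2 - ⟪u, n⟫ ^ 2) := by
  by_cases hn : n = 0
  · simp [hn]
  -- Cauchy–Schwarz against the component of `u` orthogonal to `n`, scaled by `‖n‖ ^ 2`
  set w := (‖n‖ ^ 2) • u - ⟪u, n⟫ • n
  have hdw : ⟪d, w⟫ = ‖n‖ ^ 2 * ⟪d, u⟫ := by
    simp only [w, inner_sub_right, real_inner_smul_right, h, mul_zero, sub_zero]
  have hww : ⟪w, w⟫ = ‖n‖ ^ 2 * (‖u‖ ^ 2 * ‖n‖ ^ 2 - ⟪u, n⟫ ^ 2) := by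
    simp only [w, inner_sub_left, inner_sub_right, real_inner_smul_left, real_inner_smul_right]
    rw [real_inner_self_eq_norm_sq, real_inner_self_eq_norm_sq, real_inner_comm n u]
    ring
  have hcs := real_inner_mul_inner_self_le d w
  rw [hdw, hww, real_inner_self_eq_norm_sq] at hcs
  have : 0 < ‖n‖ ^ 2 := by positivity
  nlinarith

theorem Convex.exists_subset_hyperplane_of_interior_eq_empty [FiniteDimensional ℝ E] {K : Set E}
    (hK : Convex ℝ K) (hne : K.Nonempty) (hint : interior K = ∅) :
    ∃ (v : E) (c : ℝ), v ≠ 0 ∧ K ⊆ {x | ⟪x, v⟫ = c} := by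
  obtain ⟨x₀, hx₀⟩ := hne
  have hspan : vectorSpan ℝ K ≠ ⊤ := by
    rw [ne_eq, ← AffineSubspace.affineSpan_eq_top_iff_vectorSpan_eq_top_of_nonempty ℝ E E ⟨x₀, hx₀⟩,
      ← hK.interior_nonempty_iff_affineSpan_eq_top, hint]
    exact Set.not_nonempty_empty
  obtain ⟨v, hv, hv0⟩ := Submodule.exists_mem_ne_zero_of_ne_bot
    (mt Submodule.orthogonal_eq_bot_iff.1 hspan)
  refine ⟨v, ⟪x₀, v⟫, hv0, fun x hx => ?_⟩
  have := Submodule.inner_right_of_mem_orthogonal (vsub_mem_vectorSpan ℝ hx hx₀) hv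
  rwa [vsub_eq_sub, inner_sub_left, sub_eq_zero] at this

theorem Convex.exists_subset_hyperplane_of_measure_eq_zero [FiniteDimensional ℝ E]
    [MeasurableSpace E] {μ : Measure E} [μ.IsOpenPosMeasure] {K : Set E}
    (hK : Convex ℝ K) (hne : K.Nonempty) (hμ : μ K = 0) :
    ∃ (v : E) (c : ℝ), v ≠ 0 ∧ K ⊆ {x | ⟪x, v⟫ = c} :=
  hK.exists_subset_hyperplane_of_interior_eq_empty hne <| Set.not_nonempty_iff_eq_empty.1
    fun h => (μ.measure_pos_of_nonempty_interior h).ne' hμ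

end InnerProductSpace

theorem smul_add_smul_mem_convexHull_square {V : Type*} [AddCommGroup V] [Module ℝ V] (a b : V)
    {α β : ℝ} (hα : |α| ≤ 1) (hβ : |β| ≤ 1) :
    α • a + β • b ∈ convexHull ℝ {a + b, a - b, -a + b, -a - b} := by
  rw [abs_le] at hα hβ
  have hedge {p q : V} (hp : p ∈ convexHull ℝ {a + b, a - b, -a + b, -a - b})
      (hq : q ∈ convexHull ℝ {a + b, a - b, -a + b, -a - b}) {γ : ℝ} (hγ : -1 ≤ γ ∧ γ ≤ 1) :
      ((1 + γ) / 2) • p + ((1 - γ) / 2) • q ∈ convexHull ℝ {a + b, a - b, -a + b, -a - b} :=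
    (convex_convexHull ℝ _).segment_subset hq hp
      ⟨(1 - γ) / 2, (1 + γ) / 2, by linarith, by linarith, by ring, add_comm _ _⟩
  have hvert (v) (hv : v ∈ ({a + b, a - b, -a + b, -a - b} : Set V)) :=
    subset_convexHull ℝ _ hv
  have hplus := hedge (hvert (a + b) (by simp)) (hvert (-a + b) (by simp)) hα
  have hminus := hedge (hvert (a - b) (by simp)) (hvert (-a - b) (by simp)) hα
  convert hedge hplus hminus hβ using 1
  module

theorem mul_eq_zero_of_two_mul_abs_mul_le {a b c : ℝ} (hab : 2 * |a * b| ≤ c ^ 2)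
    (hac : 2 * |a * c| ≤ b ^ 2) (hbc : 2 * |b * c| ≤ a ^ 2) : b * c = 0 := by
  -- `|ab| |ac| = a² |bc|`, so `8 (bc)² ≤ 4 |ab| |ac| ≤ (bc)²`
  have hprod : |a * b| * |a * c| = a ^ 2 * |b * c| := by
    rw [← abs_mul, show a * b * (a * c) = a ^ 2 * (b * c) by ring, abs_mul, abs_sq]
  have h4 : 4 * (|a * b| * |a * c|) ≤ (b * c) ^ 2 := by
    nlinarith [abs_nonneg (a * b), abs_nonneg (a * c)]
  have h8 : 8 * (b * c) ^ 2 ≤ 4 * (|a * b| * |a * c|) := by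
    rw [hprod, ← sq_abs (b * c)]; nlinarith [abs_nonneg (b * c)]
  exact pow_eq_zero_iff two_ne_zero |>.1 (by nlinarith [sq_nonneg (b * c)])

theorem Fin.eq_or_eq_or_eq_of_ne {i j k : Fin 3} (hij : i ≠ j) (hik : i ≠ k) (hjk : j ≠ k)
    (m : Fin 3) : m = i ∨ m = j ∨ m = k := by
  revert i j k m; decide

noncomputable def A3root (i j : Fin 3) (s t : ℝ) : EuclideanSpace ℝ (Fin 3) :=
  WithLp.toLp 2 fun k => if k = i then s / √2 else if k = j then t / √2 else 0

section A3root

variable {i j : Fin 3} {s t : ℝ}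

theorem A3root_mem_A3roots (hij : i ≠ j) (hs : s = 1 ∨ s = -1) (ht : t = 1 ∨ t = -1) :
    A3root i j s t ∈ A3roots :=
  ⟨i, j, s, t, hij, hs, ht, rfl⟩

theorem exists_eq_A3root_of_mem_A3roots {v : EuclideanSpace ℝ (Fin 3)} (hv : v ∈ A3roots) :
    ∃ i j s t, i ≠ j ∧ (s = 1 ∨ s = -1) ∧ (t = 1 ∨ t = -1) ∧ v = A3root i j s t := by
  obtain ⟨i, j, s, t, hij, hs, ht, hv⟩ := hv
  exact ⟨i, j, s, t, hij, hs, ht, congrArg (WithLp.toLp 2) hv⟩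

theorem neg_A3root : -A3root i j s t = A3root i j (-s) (-t) := by
  ext k
  simp only [A3root, PiLp.neg_apply]
  split_ifs <;> ring

theorem inner_A3root (hij : i ≠ j) (x : EuclideanSpace ℝ (Fin 3)) :
    ⟪x, A3root i j s t⟫ = (s * x i + t * x j) / √2 := by
  simp only [A3root, PiLp.inner_apply, RCLike.inner_apply, conj_trivial, Fin.sum_univ_three]
  fin_cases i <;> fin_cases j <;> simp_all <;> ring

theorem inner_A3root_add_inner_A3root (hij : i ≠ j) (x : EuclideanSpace ℝ (Fin 3)) :
    ⟪x, A3root i j 1 1⟫ + ⟪x, A3root i j 1 (-1)⟫ = √2 * x i := by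
  rw [inner_A3root hij, inner_A3root hij]
  field_simp
  linear_combination -x i * Real.mul_self_sqrt zero_le_two

theorem inner_A3root_sub_inner_A3root (hij : i ≠ j) (x : EuclideanSpace ℝ (Fin 3)) :
    ⟪x, A3root i j 1 1⟫ - ⟪x, A3root i j 1 (-1)⟫ = √2 * x j := by
  rw [inner_A3root hij, inner_A3root hij]
  field_simp
  linear_combination -x j * Real.mul_self_sqrt zero_le_two

theorem inner_A3root_smul_add_inner_A3root_smul {k : Fin 3} (hij : i ≠ j) (hik : i ≠ k)
    (hjk : j ≠ k) {x : EuclideanSpace ℝ (Fin 3)} (hx : x k = 0) :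
    ⟪x, A3root i j 1 1⟫ • A3root i j 1 1 + ⟪x, A3root i j 1 (-1)⟫ • A3root i j 1 (-1) = x := by
  ext m
  rw [inner_A3root hij, inner_A3root hij]
  rcases Fin.eq_or_eq_or_eq_of_ne hij hik hjk m with rfl | rfl | rfl <;>
    simp [A3root, hij.symm, hik.symm, hjk.symm, hx] <;>
    field_simp <;> rw [Real.sq_sqrt zero_le_two] <;> ring

end A3root

theorem neg_mem_A3roots {v : EuclideanSpace ℝ (Fin 3)} (hv : v ∈ A3roots) : -v ∈ A3roots := by
  obtain ⟨i, j, s, t, hij, hs, ht, rfl⟩ := exists_eq_A3root_of_mem_A3roots hv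
  rw [neg_A3root]
  exact A3root_mem_A3roots hij (by rcases hs with rfl | rfl <;> norm_num)
    (by rcases ht with rfl | rfl <;> norm_num)

theorem norm_of_mem_A3roots {v : EuclideanSpace ℝ (Fin 3)} (hv : v ∈ A3roots) : ‖v‖ = 1 := by
  obtain ⟨i, j, s, t, hij, hs, ht, rfl⟩ := exists_eq_A3root_of_mem_A3roots hv
  rw [← pow_eq_one_iff_of_nonneg (norm_nonneg _) two_ne_zero, ← real_inner_self_eq_norm_sq,
    inner_A3root hij]
  have h2 : √2 ^ 2 = 2 := Real.sq_sqrt zero_le_two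
  simp only [A3root, PiLp.toLp_apply, if_pos, if_neg hij.symm]
  field_simp
  rcases hs with rfl | rfl <;> rcases ht with rfl | rfl <;> linarith

theorem abs_inner_le_one_of_mem_D3 {x v : EuclideanSpace ℝ (Fin 3)} (hx : x ∈ D3)
    (hv : v ∈ A3roots) : |⟪x, v⟫| ≤ 1 := by
  have := hx _ (neg_mem_A3roots hv)
  rw [inner_neg_right] at this
  exact abs_le.2 ⟨by linarith, hx v hv⟩

theorem abs_add_abs_le_of_mem_D3 {x : EuclideanSpace ℝ (Fin 3)} (hx : x ∈ D3) {i j : Fin 3}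
    (hij : i ≠ j) : |x i| + |x j| ≤ √2 := by
  have h2 : 0 < √2 := by positivity
  have hsum := abs_inner_le_one_of_mem_D3 hx (A3root_mem_A3roots hij (.inl rfl) (.inl rfl))
  have hdiff := abs_inner_le_one_of_mem_D3 hx (A3root_mem_A3roots hij (.inl rfl) (.inr rfl))
  rw [inner_A3root hij, abs_div, abs_of_pos h2, div_le_one h2] at hsum hdiff
  rw [abs_le] at hsum hdiff
  rcases abs_cases (x i) with ⟨hi, _⟩ | ⟨hi, _⟩ <;> rcases abs_cases (x j) with ⟨hj, _⟩ | ⟨hj, _⟩ <;>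
    linarith

theorem norm_sq_le_two_of_mem_D3 {x : EuclideanSpace ℝ (Fin 3)} (hx : x ∈ D3) : ‖x‖ ^ 2 ≤ 2 := by
  have h01 := abs_add_abs_le_of_mem_D3 hx (i := 0) (j := 1) (by decide)
  have h02 := abs_add_abs_le_of_mem_D3 hx (i := 0) (j := 2) (by decide)
  have h12 := abs_add_abs_le_of_mem_D3 hx (i := 1) (j := 2) (by decide)
  rw [EuclideanSpace.real_norm_sq_eq, Fin.sum_univ_three, ← sq_abs (x 0), ← sq_abs (x 1),
    ← sq_abs (x 2)]
  have hs2 : √2 ^ 2 = 2 := Real.sq_sqrt zero_le_two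
  nlinarith [mul_nonneg (sub_nonneg.2 h01) (add_nonneg (abs_nonneg (x 0)) (abs_nonneg (x 1))),
    mul_nonneg (sub_nonneg.2 h12) (add_nonneg (abs_nonneg (x 1)) (abs_nonneg (x 2))),
    mul_nonneg (sub_nonneg.2 h02) (add_nonneg (abs_nonneg (x 0)) (abs_nonneg (x 2))),
    mul_nonneg (abs_nonneg (x 0)) (abs_nonneg (x 1))]

namespace InscribedInD3

variable {K : Set (EuclideanSpace ℝ (Fin 3))}

theorem exists_mem_coord_eq (hK : InscribedInD3 K) {i j : Fin 3} (hij : i ≠ j) {s t : ℝ}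
    (hs : s = 1 ∨ s = -1) (ht : t = 1 ∨ t = -1) : ∃ x ∈ K, s * x i + t * x j = √2 := by
  obtain ⟨x, hx, h⟩ := hK.2 _ (A3root_mem_A3roots hij hs ht)
  rw [inner_A3root hij, div_eq_one_iff_eq (by positivity)] at h
  exact ⟨x, hx, h⟩

theorem nontrivial (hK : InscribedInD3 K) : K.Nontrivial := by
  have hu := A3root_mem_A3roots (i := 0) (j := 1) (by decide) (.inl rfl) (.inl rfl)
  obtain ⟨x, hx, hxu⟩ := hK.2 _ hu
  obtain ⟨y, hy, hyu⟩ := hK.2 _ (neg_mem_A3roots hu)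
  refine ⟨x, hx, y, hy, fun hxy => ?_⟩
  rw [inner_neg_right, ← hxy, hxu] at hyu
  norm_num at hyu

theorem two_mul_inner_sq_le_norm_sq (hK : InscribedInD3 K) {n : EuclideanSpace ℝ (Fin 3)}
    {c : ℝ} (hplane : K ⊆ {x | ⟪x, n⟫ = c}) {u : EuclideanSpace ℝ (Fin 3)} (hu : u ∈ A3roots) :
    2 * ⟪u, n⟫ ^ 2 ≤ ‖n‖ ^ 2 := by
  obtain ⟨x, hx, hxu⟩ := hK.2 _ hu
  obtain ⟨y, hy, hyu⟩ := hK.2 _ (neg_mem_A3roots hu)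
  rw [inner_neg_right] at hyu
  have hdn : ⟪x - y, n⟫ = 0 := by
    rw [inner_sub_left, hplane hx, hplane hy, sub_self]
  have hdu : ⟪x - y, u⟫ = 2 := by
    rw [inner_sub_left]; linarith
  have hd : ‖x - y‖ ^ 2 ≤ 8 := by
    have := norm_sub_le x y
    nlinarith [norm_sq_le_two_of_mem_D3 (hK.1 hx), norm_sq_le_two_of_mem_D3 (hK.1 hy),
      sq_nonneg (‖x‖ - ‖y‖), norm_nonneg (x - y)]
  have hcs := inner_sq_mul_norm_sq_le_of_inner_eq_zero u hdn
  have hun : ⟪u, n⟫ ^ 2 ≤ ‖n‖ ^ 2 := by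
    have := abs_real_inner_le_norm u n
    rw [norm_of_mem_A3roots hu, one_mul] at this
    exact sq_le_sq' (neg_le_of_abs_le this) (le_of_abs_le this)
  rw [hdu, norm_of_mem_A3roots hu] at hcs
  nlinarith

theorem coord_eq_zero_of_forall_coord_eq (hK : InscribedInD3 K) {k : Fin 3} {c : ℝ}
    (hc : ∀ x ∈ K, x k = c) : c = 0 := by
  obtain ⟨i, hik⟩ := exists_ne k
  obtain ⟨x, hx, hxk⟩ := hK.exists_mem_coord_eq hik (.inl rfl) (.inl rfl)
  obtain ⟨y, hy, hyk⟩ := hK.exists_mem_coord_eq hik (.inl rfl) (.inr rfl)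
  have hx' := abs_add_abs_le_of_mem_D3 (hK.1 hx) hik
  have hy' := abs_add_abs_le_of_mem_D3 (hK.1 hy) hik
  rw [hc x hx] at hxk hx'
  rw [hc y hy] at hyk hy'
  exact abs_nonpos_iff.1 (by linarith [le_abs_self (x i), le_abs_self (y i)])

theorem exists_coord_eq_zero_of_subset_hyperplane (hK : InscribedInD3 K)
    {n : EuclideanSpace ℝ (Fin 3)} {c : ℝ} (hn : n ≠ 0) (hplane : K ⊆ {x | ⟪x, n⟫ = c}) :
    ∃ k, ∀ x ∈ K, x k = 0 := by
  have hsq (i j : Fin 3) (hij : i ≠ j) (t : ℝ) (ht : t = 1 ∨ t = -1) :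
      (n i + t * n j) ^ 2 ≤ n 0 ^ 2 + n 1 ^ 2 + n 2 ^ 2 := by
    have h := hK.two_mul_inner_sq_le_norm_sq hplane (A3root_mem_A3roots hij (.inl rfl) ht)
    rw [real_inner_comm, inner_A3root hij, div_pow, Real.sq_sqrt zero_le_two,
      EuclideanSpace.real_norm_sq_eq, Fin.sum_univ_three, one_mul] at h
    linarith
  have hpair (i j k : Fin 3) (hij : i ≠ j)
      (hk : n 0 ^ 2 + n 1 ^ 2 + n 2 ^ 2 = n i ^ 2 + n j ^ 2 + n k ^ 2) :
      2 * |n i * n j| ≤ n k ^ 2 := by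
    have h1 := hsq i j hij 1 (.inl rfl)
    have h2 := hsq i j hij (-1) (.inr rfl)
    rw [hk] at h1 h2
    have : |2 * (n i * n j)| ≤ n k ^ 2 := abs_le.2 ⟨by nlinarith, by nlinarith⟩
    rwa [abs_mul, abs_two] at this
  have h01 := mul_eq_zero_of_two_mul_abs_mul_le (hpair 2 0 1 (by decide) (by ring))
    (hpair 2 1 0 (by decide) (by ring)) (hpair 0 1 2 (by decide) (by ring))
  have h02 := mul_eq_zero_of_two_mul_abs_mul_le (hpair 1 0 2 (by decide) (by ring))
    (hpair 1 2 0 (by decide) (by ring)) (hpair 0 2 1 (by decide) (by ring))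
  have h12 := mul_eq_zero_of_two_mul_abs_mul_le (hpair 0 1 2 (by decide) (by ring))
    (hpair 0 2 1 (by decide) (by ring)) (hpair 1 2 0 (by decide) (by ring))
  obtain ⟨k, hk⟩ : ∃ k, n k ≠ 0 := by
    by_contra! h
    exact hn (by ext m; exact h m)
  have hzero (m : Fin 3) (hm : m ≠ k) : n m = 0 := by
    have : n m * n k = 0 := by
      fin_cases m <;> fin_cases k <;> simp_all [mul_comm]
    exact (mul_eq_zero.1 this).resolve_right hk
  have hinner (x : EuclideanSpace ℝ (Fin 3)) : ⟪x, n⟫ = x k * n k := by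
    rw [PiLp.inner_apply, Finset.sum_eq_single k (fun m _ hm => by simp [hzero m hm]) (by simp)]
    simp [mul_comm]
  refine ⟨k, fun x hx => ?_⟩
  have hc : ∀ y ∈ K, y k = c / n k := fun y hy => by
    rw [eq_div_iff hk, ← hinner]; exact hplane hy
  rw [hc x hx, hK.coord_eq_zero_of_forall_coord_eq hc]

theorem exists_mem_sqrt_two_mul_coord_eq (hK : InscribedInD3 K) {k m : Fin 3}
    (hk : ∀ x ∈ K, x k = 0) (hm : m ≠ k) {s : ℝ} (hs : s = 1 ∨ s = -1) :
    ∃ x ∈ K, √2 * x m = 2 * s := by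
  obtain ⟨x, hx, h⟩ := hK.exists_mem_coord_eq hm hs (.inl rfl)
  rw [hk x hx, mul_zero, add_zero] at h
  have hs2 : √2 * √2 = 2 := Real.mul_self_sqrt zero_le_two
  refine ⟨x, hx, ?_⟩
  rcases hs with rfl | rfl
  · linear_combination √2 * h + hs2
  · linear_combination -√2 * h - hs2

theorem smul_A3root_add_smul_A3root_mem (hK : InscribedInD3 K) {i j k : Fin 3} (hij : i ≠ j)
    (hik : i ≠ k) (hjk : j ≠ k) (hk : ∀ x ∈ K, x k = 0) {σ τ : ℝ} (hσ : σ = 1 ∨ σ = -1)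
    (hτ : τ = 1 ∨ τ = -1) : σ • A3root i j 1 1 + τ • A3root i j 1 (-1) ∈ K := by
  obtain ⟨x, hx, hx2⟩ : ∃ x ∈ K, σ * ⟪x, A3root i j 1 1⟫ + τ * ⟪x, A3root i j 1 (-1)⟫ = 2 := by
    have hsum := inner_A3root_add_inner_A3root hij
    have hdiff := inner_A3root_sub_inner_A3root hij
    rcases hσ with rfl | rfl <;> rcases hτ with rfl | rfl
    · obtain ⟨x, hx, h⟩ := hK.exists_mem_sqrt_two_mul_coord_eq hk hik (.inl rfl)
      exact ⟨x, hx, by linarith [hsum x]⟩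
    · obtain ⟨x, hx, h⟩ := hK.exists_mem_sqrt_two_mul_coord_eq hk hjk (.inl rfl)
      exact ⟨x, hx, by linarith [hdiff x]⟩
    · obtain ⟨x, hx, h⟩ := hK.exists_mem_sqrt_two_mul_coord_eq hk hjk (.inr rfl)
      exact ⟨x, hx, by linarith [hdiff x]⟩
    · obtain ⟨x, hx, h⟩ := hK.exists_mem_sqrt_two_mul_coord_eq hk hik (.inr rfl)
      exact ⟨x, hx, by linarith [hsum x]⟩
  have ha := abs_le.1 <| abs_inner_le_one_of_mem_D3 (hK.1 hx)
    (A3root_mem_A3roots hij (.inl rfl) (.inl rfl))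
  have hb := abs_le.1 <| abs_inner_le_one_of_mem_D3 (hK.1 hx)
    (A3root_mem_A3roots hij (.inl rfl) (.inr rfl))
  have hα : ⟪x, A3root i j 1 1⟫ = σ := by
    rcases hσ with rfl | rfl <;> rcases hτ with rfl | rfl <;> linarith
  have hβ : ⟪x, A3root i j 1 (-1)⟫ = τ := by
    rcases hσ with rfl | rfl <;> rcases hτ with rfl | rfl <;> linarith
  rwa [← hα, ← hβ, inner_A3root_smul_add_inner_A3root_smul hij hik hjk (hk x hx)]

theorem isSquareIn3_of_coord_eq_zero (hK : InscribedInD3 K) (hconv : Convex ℝ K) {k : Fin 3}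
    (hk : ∀ x ∈ K, x k = 0) : IsSquareIn3 K := by
  obtain ⟨i, j, hij, hik, hjk⟩ : ∃ i j : Fin 3, i ≠ j ∧ i ≠ k ∧ j ≠ k := by
    clear hk; revert k; decide
  have ha := A3root_mem_A3roots hij (.inl rfl) (.inl rfl)
  have hb := A3root_mem_A3roots hij (.inl rfl) (.inr rfl)
  have hvertex {σ τ : ℝ} (hσ : σ = 1 ∨ σ = -1) (hτ : τ = 1 ∨ τ = -1) :=
    hK.smul_A3root_add_smul_A3root_mem hij hik hjk hk hσ hτ
  refine ⟨0, A3root i j 1 1, A3root i j 1 (-1), ?_, ?_, ?_, ?_⟩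
  · rw [inner_A3root hij]; simp [A3root, hij.symm]
  · rw [norm_of_mem_A3roots ha, norm_of_mem_A3roots hb]
  · exact fun h => by simpa [h] using norm_of_mem_A3roots ha
  simp only [zero_add, zero_sub]
  refine subset_antisymm (fun x hx => ?_) (convexHull_min ?_ hconv)
  · rw [← inner_A3root_smul_add_inner_A3root_smul hij hik hjk (hk x hx)]
    exact smul_add_smul_mem_convexHull_square _ _ (abs_inner_le_one_of_mem_D3 (hK.1 hx) ha)
      (abs_inner_le_one_of_mem_D3 (hK.1 hx) hb)
  rintro _ (rfl | rfl | rfl | rfl)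
  · simpa using hvertex (.inl rfl) (.inl rfl)
  · simpa [sub_eq_add_neg] using hvertex (.inl rfl) (.inr rfl)
  · simpa using hvertex (.inr rfl) (.inl rfl)
  · simpa [sub_eq_add_neg] using hvertex (.inr rfl) (.inr rfl)

end InscribedInD3

/-- Every strictly convex body inscribed in the rhombic dodecahedron has positive
volume; more generally any convex body inscribed in `D3` and not contained in a plane
has positive volume; and every closed convex set inscribed in `D3` of volume zero is a
square. -/
theorem inscribed_in_rhombic_dodecahedron_volume :
    (∀ K : Set (EuclideanSpace ℝ (Fin 3)), IsCompact K → Convex ℝ K → K.Nonempty →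
      StrictConvex ℝ K → InscribedInD3 K → 0 < volume K) ∧
    (∀ K : Set (EuclideanSpace ℝ (Fin 3)), IsCompact K → Convex ℝ K →
      InscribedInD3 K →
      (¬ ∃ (v : EuclideanSpace ℝ (Fin 3)) (c : ℝ), v ≠ 0 ∧ K ⊆ {x | ⟪x, v⟫ = c}) →
      0 < volume K) ∧
    (∀ K : Set (EuclideanSpace ℝ (Fin 3)), IsClosed K → Convex ℝ K →
      InscribedInD3 K → volume K = 0 → IsSquareIn3 K) := by
  refine ⟨fun K _ _ _ hstrict hK => ?_, fun K _ hconv hK hflat => ?_,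
    fun K _ hconv hK hvol => ?_⟩
  · obtain ⟨x, hx, y, hy, hxy⟩ := hK.nontrivial
    exact volume.measure_pos_of_nonempty_interior
      ⟨_, hstrict hx hy hxy one_half_pos one_half_pos (add_halves 1)⟩
  · exact pos_iff_ne_zero.2 fun hvol =>
      hflat (hconv.exists_subset_hyperplane_of_measure_eq_zero hK.nontrivial.nonempty hvol)
  · obtain ⟨v, c, hv, hplane⟩ :=
      hconv.exists_subset_hyperplane_of_measure_eq_zero hK.nontrivial.nonempty hvol
    obtain ⟨k, hk⟩ := hK.exists_coord_eq_zero_of_subset_hyperplane hv hplane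
    exact hK.isSquareIn3_of_coord_eq_zero hconv hk
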